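/- Let F(μ) = μ e^{μ²} + 2(1−μ²)∫_0^μ e^{λ²} dλ. Then F(1) = e, F'(1) = 3e − 4∫_0^1 e^{λ²}dλ > 2.304, F''(1) = 2e − 4∫_0^1 e^{λ²}dλ > −0.415, F'''(μ) ≥ 0 for μ ≥ 1, and consequently F(μ) ≥ e − (0.415/2)(√3−1)² > 2.607 for all μ ∈ [1, √3]. -/

import Mathlib

open Real

/-- The function `F(μ) = μ e^{μ²} + 2(1−μ²)∫_0^μ e^{λ²} dλ`. -/
noncomputable def Ffun (μ : ℝ) : ℝ :=
  μ * Real.exp (μ ^ 2) + 2 * (1 - μ ^ 2) * ∫ l in (0:ℝ)..μ, Real.exp (l ^ 2)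

noncomputable def Ifun (μ : ℝ) : ℝ := ∫ l in (0:ℝ)..μ, Real.exp (l ^ 2)

lemma contE : Continuous fun l : ℝ => Real.exp (l ^ 2) := by fun_prop

lemma Ifun_hasDeriv (μ : ℝ) : HasDerivAt Ifun (Real.exp (μ ^ 2)) μ :=
  intervalIntegral.integral_hasDerivAt_right (contE.intervalIntegrable _ _)
    (contE.stronglyMeasurableAtFilter _ _) contE.continuousAt

lemma expsq_hasDeriv (μ : ℝ) :
    HasDerivAt (fun x : ℝ => Real.exp (x ^ 2)) (Real.exp (μ ^ 2) * (2 * μ)) μ := by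
  simpa [Function.comp_def] using (Real.hasDerivAt_exp (μ ^ 2)).comp μ (hasDerivAt_pow 2 μ)

lemma Ffun_hasDeriv (μ : ℝ) :
    HasDerivAt Ffun (3 * Real.exp (μ ^ 2) - 4 * μ * Ifun μ) μ := by
  have h1 : HasDerivAt (fun x : ℝ => x * Real.exp (x ^ 2))
      (1 * Real.exp (μ ^ 2) + μ * (Real.exp (μ ^ 2) * (2 * μ))) μ :=
    (hasDerivAt_id μ).mul (expsq_hasDeriv μ)
  have h2 : HasDerivAt (fun x : ℝ => 2 * (1 - x ^ 2)) (2 * (0 - 2 * μ ^ 1)) μ :=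
    (((hasDerivAt_const μ (1:ℝ)).sub (hasDerivAt_pow 2 μ))).const_mul 2
  have h3 := h2.mul (Ifun_hasDeriv μ)
  have h4 := h1.add h3
  have : Ffun = fun x : ℝ => x * Real.exp (x ^ 2) + (fun x : ℝ => 2 * (1 - x ^ 2)) x * Ifun x := by
    funext x; simp [Ffun, Ifun]
  rw [this]
  exact h4.congr_deriv (by ring)

lemma deriv_Ffun : deriv Ffun = fun μ => 3 * Real.exp (μ ^ 2) - 4 * μ * Ifun μ :=
  funext fun μ => (Ffun_hasDeriv μ).deriv

lemma F1_hasDeriv (μ : ℝ) :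
    HasDerivAt (fun μ => 3 * Real.exp (μ ^ 2) - 4 * μ * Ifun μ)
      (2 * μ * Real.exp (μ ^ 2) - 4 * Ifun μ) μ := by
  have h1 := (expsq_hasDeriv μ).const_mul 3
  have h2 := (((hasDerivAt_id μ).const_mul (4:ℝ)).mul (Ifun_hasDeriv μ))
  have h := h1.sub h2
  exact h.congr_deriv (by simp only [id_eq]; ring)

lemma iteratedDeriv_two :
    iteratedDeriv 2 Ffun = fun μ => 2 * μ * Real.exp (μ ^ 2) - 4 * Ifun μ := by
  rw [iteratedDeriv_succ, iteratedDeriv_one, deriv_Ffun]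
  exact funext fun μ => (F1_hasDeriv μ).deriv

lemma F2_hasDeriv (μ : ℝ) :
    HasDerivAt (fun μ => 2 * μ * Real.exp (μ ^ 2) - 4 * Ifun μ)
      ((4 * μ ^ 2 - 2) * Real.exp (μ ^ 2)) μ := by
  have h1 := (((hasDerivAt_id μ).const_mul (2:ℝ)).mul (expsq_hasDeriv μ))
  have h2 := (Ifun_hasDeriv μ).const_mul (4:ℝ)
  have h := h1.sub h2
  exact h.congr_deriv (by simp only [id_eq]; ring)

lemma iteratedDeriv_three :
    iteratedDeriv 3 Ffun = fun μ => (4 * μ ^ 2 - 2) * Real.exp (μ ^ 2) := by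
  rw [iteratedDeriv_succ, iteratedDeriv_two]
  exact funext fun μ => (F2_hasDeriv μ).deriv

/-- Numerical upper bound on `∫_0^1 e^{λ²} dλ`. -/
lemma Ifun_one_le : Ifun 1 ≤ 110687069 / 75675600 := by
  have hle : ∀ x ∈ Set.Icc (0:ℝ) 1, Real.exp (x ^ 2) ≤
      1 + x ^ 2 + x ^ 4 / 2 + x ^ 6 / 6 + x ^ 8 / 24 + x ^ 10 / 120 + x ^ 12 / 720
        + x ^ 14 * (8 / 35280) := by
    intro x hx
    obtain ⟨hx0, hx1⟩ := hx
    have h0 : (0:ℝ) ≤ x ^ 2 := sq_nonneg x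
    have h1 : x ^ 2 ≤ 1 := by nlinarith
    have := Real.exp_bound' h0 h1 (n := 7) (by norm_num)
    simp only [Finset.sum_range_succ, Finset.sum_range_zero] at this
    have e0 : ((0:ℕ).factorial : ℝ) = 1 := by norm_num
    have e1 : ((1:ℕ).factorial : ℝ) = 1 := by norm_num
    have e2 : ((2:ℕ).factorial : ℝ) = 2 := by norm_num [Nat.factorial]
    have e3 : ((3:ℕ).factorial : ℝ) = 6 := by norm_num [Nat.factorial]
    have e4 : ((4:ℕ).factorial : ℝ) = 24 := by norm_num [Nat.factorial]
    have e5 : ((5:ℕ).factorial : ℝ) = 120 := by norm_num [Nat.factorial]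
    have e6 : ((6:ℕ).factorial : ℝ) = 720 := by norm_num [Nat.factorial]
    have e7 : ((7:ℕ).factorial : ℝ) = 5040 := by norm_num [Nat.factorial]
    rw [e0, e1, e2, e3, e4, e5, e6, e7] at this
    calc Real.exp (x ^ 2) ≤ _ := this
      _ = 1 + x ^ 2 + x ^ 4 / 2 + x ^ 6 / 6 + x ^ 8 / 24 + x ^ 10 / 120 + x ^ 12 / 720
          + x ^ 14 * (8 / 35280) := by ring
  have hInt : Ifun 1 ≤ ∫ x in (0:ℝ)..1,
      (1 + x ^ 2 + x ^ 4 / 2 + x ^ 6 / 6 + x ^ 8 / 24 + x ^ 10 / 120 + x ^ 12 / 720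
        + x ^ 14 * (8 / 35280)) := by
    apply intervalIntegral.integral_mono_on (by norm_num)
      (contE.intervalIntegrable _ _)
      (Continuous.intervalIntegrable (by fun_prop) _ _) hle
  have hval : (∫ x in (0:ℝ)..1,
      (1 + x ^ 2 + x ^ 4 / 2 + x ^ 6 / 6 + x ^ 8 / 24 + x ^ 10 / 120 + x ^ 12 / 720
        + x ^ 14 * (8 / 35280))) = 110687069 / 75675600 := by
    have : ∀ x : ℝ, (1 + x ^ 2 + x ^ 4 / 2 + x ^ 6 / 6 + x ^ 8 / 24 + x ^ 10 / 120 + x ^ 12 / 720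
        + x ^ 14 * (8 / 35280)) =
        ∑ i ∈ Finset.range 8,
          (if i = 7 then (8:ℝ) / 35280 else ((Nat.factorial i : ℝ)⁻¹)) * x ^ (2 * i) := by
      intro x
      simp only [Finset.sum_range_succ, Finset.sum_range_zero]
      norm_num [Nat.factorial]
      ring
    simp only [this]
    rw [intervalIntegral.integral_finset_sum]
    · have hterm : ∀ i : ℕ, (∫ x in (0:ℝ)..1,
          (if i = 7 then (8:ℝ) / 35280 else ((Nat.factorial i : ℝ)⁻¹)) * x ^ (2 * i))
          = (if i = 7 then (8:ℝ) / 35280 else ((Nat.factorial i : ℝ)⁻¹)) / (2 * i + 1) := by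
        intro i
        rw [intervalIntegral.integral_const_mul, integral_pow, one_pow,
          zero_pow (by omega), sub_zero, mul_one_div]
        push_cast
        ring
      simp only [hterm]
      rw [Finset.sum_range_succ, Finset.sum_range_succ, Finset.sum_range_succ,
        Finset.sum_range_succ, Finset.sum_range_succ, Finset.sum_range_succ,
        Finset.sum_range_succ, Finset.sum_range_succ, Finset.sum_range_zero]
      norm_num [Nat.factorial]
    · intro i _
      exact Continuous.intervalIntegrable (by fun_prop) _ _
  linarith

/-- Generic: f a ≤ f b when f' ≥ 0 on [a,b]. -/
lemma le_of_deriv_nonneg {f f' : ℝ → ℝ} (hf : ∀ x, HasDerivAt f (f' x) x)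
    {a b : ℝ} (hab : a ≤ b) (h : ∀ x, a ≤ x → x ≤ b → 0 ≤ f' x) : f a ≤ f b := by
  have hmono : MonotoneOn f (Set.Icc a b) := by
    apply monotoneOn_of_hasDerivWithinAt_nonneg (convex_Icc a b)
      (fun x _ => (hf x).continuousAt.continuousWithinAt)
      (fun x _ => (hf x).hasDerivWithinAt)
    intro x hx
    rw [interior_Icc] at hx
    exact h x hx.1.le hx.2.le
  exact hmono (Set.left_mem_Icc.mpr hab) (Set.right_mem_Icc.mpr hab) hab

/-- `F(1) = e`, `F'(1) = 3e − 4∫_0^1 e^{λ²}dλ > 2.304`,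
`F''(1) = 2e − 4∫_0^1 e^{λ²}dλ > −0.415`, `F''' ≥ 0` on `[1,∞)`, and hence
`F(μ) ≥ e − (0.415/2)(√3−1)² > 2.607` for `μ ∈ [1,√3]`. -/
theorem Ffun_bounds :
    Ffun 1 = Real.exp 1 ∧
    (deriv Ffun 1 = 3 * Real.exp 1 - 4 * ∫ l in (0:ℝ)..1, Real.exp (l ^ 2)) ∧
    2.304 < deriv Ffun 1 ∧
    (iteratedDeriv 2 Ffun 1 =
      2 * Real.exp 1 - 4 * ∫ l in (0:ℝ)..1, Real.exp (l ^ 2)) ∧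
    -0.415 < iteratedDeriv 2 Ffun 1 ∧
    (∀ μ : ℝ, 1 ≤ μ → 0 ≤ iteratedDeriv 3 Ffun μ) ∧
    (∀ μ : ℝ, 1 ≤ μ → μ ≤ Real.sqrt 3 →
      Real.exp 1 - 0.415 / 2 * (Real.sqrt 3 - 1) ^ 2 ≤ Ffun μ) ∧
    2.607 < Real.exp 1 - 0.415 / 2 * (Real.sqrt 3 - 1) ^ 2 := by
  have he : (2.7182818283 : ℝ) < Real.exp 1 := Real.exp_one_gt_d9
  have hI := Ifun_one_le
  have hI0 : (0:ℝ) ≤ Ifun 1 := by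
    apply intervalIntegral.integral_nonneg (by norm_num)
    intro x _; positivity
  have hF0 : Ffun 1 = Real.exp 1 := by simp [Ffun]
  have hF1 : deriv Ffun 1 = 3 * Real.exp 1 - 4 * Ifun 1 := by
    rw [deriv_Ffun]; norm_num
  have hF1' : (2.304 : ℝ) < deriv Ffun 1 := by
    rw [hF1]; norm_num; linarith
  have hF2 : iteratedDeriv 2 Ffun 1 = 2 * Real.exp 1 - 4 * Ifun 1 := by
    rw [iteratedDeriv_two]; norm_num
  have hF2' : (-0.415 : ℝ) < iteratedDeriv 2 Ffun 1 := by
    rw [hF2]; nlinarith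
  have hF3 : ∀ μ : ℝ, 1 ≤ μ → 0 ≤ iteratedDeriv 3 Ffun μ := by
    intro μ hμ
    rw [iteratedDeriv_three]
    have : (0:ℝ) ≤ 4 * μ ^ 2 - 2 := by nlinarith
    positivity
  -- sqrt 3 bounds
  have hs3 : Real.sqrt 3 ^ 2 = 3 := Real.sq_sqrt (by norm_num)
  have hs3nn : (0:ℝ) ≤ Real.sqrt 3 := Real.sqrt_nonneg 3
  have hs3lt : Real.sqrt 3 < 2 := by nlinarith
  have hs3gt : (1.7320508 : ℝ) < Real.sqrt 3 := by nlinarith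
  -- F2 ≥ F2 1 on [1, b] for any b
  have hF2mono : ∀ x : ℝ, 1 ≤ x →
      2 * 1 * Real.exp 1 - 4 * Ifun 1 ≤ 2 * x * Real.exp (x ^ 2) - 4 * Ifun x := by
    intro x hx
    have := le_of_deriv_nonneg F2_hasDeriv hx (fun t ht _ => by
      have : (0:ℝ) ≤ 4 * t ^ 2 - 2 := by nlinarith
      positivity)
    simpa using this
  -- F1 bound: consider g x = F1 x + 0.415 x, g' = F2 + 0.415 ≥ 0 on [1,∞)
  have hF1lb : ∀ x : ℝ, 1 ≤ x →
      3 * Real.exp 1 - 4 * Ifun 1 - 0.415 * (x - 1) ≤ 3 * Real.exp (x ^ 2) - 4 * x * Ifun x := by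
    intro x hx
    have hg : ∀ t : ℝ, HasDerivAt
        (fun t => 3 * Real.exp (t ^ 2) - 4 * t * Ifun t + 0.415 * t)
        ((2 * t * Real.exp (t ^ 2) - 4 * Ifun t) + 0.415) t := by
      intro t
      have := (F1_hasDeriv t).add ((hasDerivAt_id t).const_mul (0.415:ℝ))
      exact this.congr_deriv (by ring)
    have hge := le_of_deriv_nonneg hg hx (fun t ht _ => by
      have h2 := hF2mono t ht
      have : (-0.415 : ℝ) < 2 * 1 * Real.exp 1 - 4 * Ifun 1 := by nlinarith
      linarith)
    have h1 : (1:ℝ) ^ 2 = 1 := one_pow 2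
    rw [h1] at hge
    linarith
  have hFmono : ∀ μ : ℝ, 1 ≤ μ → μ ≤ Real.sqrt 3 → Ffun 1 ≤ Ffun μ := by
    intro μ h1μ hμ3
    apply le_of_deriv_nonneg (fun x => Ffun_hasDeriv x) h1μ
    intro x hx1 hxμ
    have hx3 : x ≤ Real.sqrt 3 := le_trans hxμ hμ3
    have := hF1lb x hx1
    have hx2 : x - 1 < 1 := by linarith
    nlinarith
  have hlast : (2.607 : ℝ) < Real.exp 1 - 0.415 / 2 * (Real.sqrt 3 - 1) ^ 2 := by
    nlinarith
  refine ⟨hF0, ?_, hF1', ?_, hF2', hF3, ?_, hlast⟩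
  · rw [hF1]; rfl
  · rw [hF2]; rfl
  · intro μ h1 h2
    have := hFmono μ h1 h2
    rw [hF0] at this
    nlinarith [sq_nonneg (Real.sqrt 3 - 1)]
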